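/- arXiv:2604.10553 — 2 statements merged into one kernel-verified Lean document; each statement's English description precedes it below -/
import Mathlib

section
/- Let A, B, C be real positive semidefinite matrices with A ≠ 0. Then A ⊗ B ⪯ A ⊗ C if and only if B ⪯ C, where ⊗ is the Kronecker product and X ⪯ Y means Y − X is positive semidefinite. -/
open Matrix
open scoped Kronecker

lemma sum_prod_mul' {a b : Type*} [Fintype a] [Fintype b] (f : a → ℝ) (g : b → ℝ) :
    ∑ p : a × b, f p.1 * g p.2 = (∑ i, f i) * ∑ j, g j := by
  rw [Finset.sum_mul_sum, ← Finset.sum_product']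
  rfl

lemma kron_quad' {a b : Type*} [Fintype a] [Fintype b] (M : Matrix a a ℝ) (N : Matrix b b ℝ)
    (x : a → ℝ) (y : b → ℝ) :
    (fun p : a × b => x p.1 * y p.2) ⬝ᵥ (M ⊗ₖ N) *ᵥ (fun p : a × b => x p.1 * y p.2)
      = (x ⬝ᵥ M *ᵥ x) * (y ⬝ᵥ N *ᵥ y) := by
  have hmv : (M ⊗ₖ N) *ᵥ (fun p : a × b => x p.1 * y p.2)
      = fun p : a × b => (M *ᵥ x) p.1 * (N *ᵥ y) p.2 := by
    funext p
    simp only [mulVec, dotProduct, kroneckerMap_apply]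
    rw [show (∑ q : a × b, M p.1 q.1 * N p.2 q.2 * (x q.1 * y q.2))
        = ∑ q : a × b, (M p.1 q.1 * x q.1) * (N p.2 q.2 * y q.2) by
      exact Finset.sum_congr rfl fun q _ => by ring]
    exact sum_prod_mul' (fun k => M p.1 k * x k) (fun l => N p.2 l * y l)
  rw [hmv]
  simp only [dotProduct]
  rw [show (∑ p : a × b, (x p.1 * y p.2) * ((M *ᵥ x) p.1 * (N *ᵥ y) p.2))
      = ∑ p : a × b, (x p.1 * (M *ᵥ x) p.1) * (y p.2 * (N *ᵥ y) p.2) by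
    exact Finset.sum_congr rfl fun q _ => by ring]
  exact sum_prod_mul' (fun i => x i * (M *ᵥ x) i) (fun j => y j * (N *ᵥ y) j)

lemma kron_posSemidef' {a b : Type*} [Fintype a] [Fintype b]
    {M : Matrix a a ℝ} {N : Matrix b b ℝ} (hM : M.PosSemidef) (hN : N.PosSemidef) :
    (M ⊗ₖ N).PosSemidef := by
  exact hM.kronecker hN

/-- Let `A`, `B`, `C` be real positive semidefinite matrices with `A ≠ 0`.
Then `A ⊗ B ⪯ A ⊗ C` if and only if `B ⪯ C`, where `⊗` is the Kronecker product and
`X ⪯ Y` means `Y − X` is positive semidefinite. -/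
theorem kronecker_posSemidef_order_iff {a b : Type*} [Fintype a] [Fintype b]
    (A : Matrix a a ℝ) (B C : Matrix b b ℝ)
    (hA : A.PosSemidef) (hB : B.PosSemidef) (hC : C.PosSemidef) (hA0 : A ≠ 0) :
    (A ⊗ₖ C - A ⊗ₖ B).PosSemidef ↔ (C - B).PosSemidef := by
  have hsplit : A ⊗ₖ C - A ⊗ₖ B = A ⊗ₖ (C - B) := by
    ext p q
    simp [kroneckerMap_apply, mul_sub]
  rw [hsplit]
  constructor
  · intro H
    -- find x with positive quadratic form
    have hx : ∃ x : a → ℝ, 0 < x ⬝ᵥ A *ᵥ x := by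
      by_contra h
      push_neg at h
      apply hA0
      have hz : ∀ x : a → ℝ, A *ᵥ x = 0 := fun x =>
        (hA.dotProduct_mulVec_zero_iff x).mp (le_antisymm (by simpa using h x) (hA.dotProduct_mulVec_nonneg x))
      classical
      ext i j
      have := congrFun (hz (Pi.single j 1)) i
      simpa [mulVec_single] using this
    obtain ⟨x, hx⟩ := hx
    refine PosSemidef.of_dotProduct_mulVec_nonneg (hC.1.sub hB.1) fun y => ?_
    have h1 := H.dotProduct_mulVec_nonneg (fun p : a × b => x p.1 * y p.2)
    rw [show star (fun p : a × b => x p.1 * y p.2) = fun p : a × b => x p.1 * y p.2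
      from star_trivial _, kron_quad'] at h1
    simpa using (mul_nonneg_iff_of_pos_left hx).mp (by simpa using h1)
  · intro H
    exact kron_posSemidef' hA H
end

section
/- Let A_G ∈ {0,1}^{n×n} be the adjacency matrix of a simple undirected graph with node degrees D_{ii}, D̃ = I + D, and L = D̃^{-1/2} (I + A_G) D̃^{-1/2}. Then for every integer d ≥ 1, ( ∑_i √(1 + D_{ii}) ) / √( ∑_i (1 + D_{ii}) ) ≤ ‖L^{d−1} 𝟙‖₂ ≤ √n. -/
open Matrix

/-- The Euclidean (`ℓ₂`) norm of a finitely-indexed real vector. -/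
noncomputable def vnorm {ι : Type*} [Fintype ι] (x : ι → ℝ) : ℝ :=
  Real.sqrt (∑ i, x i ^ 2)

/-- The spectral norm `‖A‖₂ = max_{x ≠ 0} ‖Ax‖₂ / ‖x‖₂` of a real matrix. -/
noncomputable def specNorm {ι κ : Type*} [Fintype ι] [Fintype κ] (A : Matrix ι κ ℝ) : ℝ :=
  ⨆ x : κ → ℝ, vnorm (A.mulVec x) / vnorm x

/-- The spectral radius of a real matrix: the supremum of the absolute values of its
complex eigenvalues. -/
noncomputable def spectralRad {n : ℕ} (M : Matrix (Fin n) (Fin n) ℝ) : ℝ :=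
  sSup ((fun z : ℂ => ‖z‖) '' spectrum ℂ (M.map fun x : ℝ => (x : ℂ)))

/-- The degree of node `i`: `deg A i = ∑ j, A i j = (A 𝟙) i`. -/
noncomputable def deg {n : ℕ} (A : Matrix (Fin n) (Fin n) ℝ) (i : Fin n) : ℝ :=
  ∑ j, A i j

/-- The normalized adjacency matrix with self-loops
`L = D̃^{-1/2} (I + A) D̃^{-1/2}` with `D̃ = I + D`. -/
noncomputable def normAdj {n : ℕ} (A : Matrix (Fin n) (Fin n) ℝ) :
    Matrix (Fin n) (Fin n) ℝ :=
  Matrix.diagonal (fun i => (Real.sqrt (1 + deg A i))⁻¹) * (1 + A) *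
    Matrix.diagonal (fun i => (Real.sqrt (1 + deg A i))⁻¹)

/-- The random-walk diffusion matrix with self-loops `L_rw = D̃⁻¹ (I + A)`. -/
noncomputable def rwAdj {n : ℕ} (A : Matrix (Fin n) (Fin n) ℝ) :
    Matrix (Fin n) (Fin n) ℝ :=
  Matrix.diagonal (fun i => (1 + deg A i)⁻¹) * (1 + A)

lemma normAdj_symm {n : ℕ} (A : Matrix (Fin n) (Fin n) ℝ) (hsym : A.IsSymm) :
    (normAdj A).IsSymm := by
  unfold normAdj
  unfold Matrix.IsSymm
  rw [transpose_mul, transpose_mul, diagonal_transpose, transpose_add, transpose_one, hsym]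
  rw [mul_assoc]

lemma normAdj_nonneg {n : ℕ} (A : Matrix (Fin n) (Fin n) ℝ) (hA : ∀ i j, 0 ≤ A i j) :
    ∀ i j, 0 ≤ normAdj A i j := by
  intro i j
  have : normAdj A i j = (Real.sqrt (1 + deg A i))⁻¹ * (1 + A) i j *
      (Real.sqrt (1 + deg A j))⁻¹ := by
    simp [normAdj, Matrix.mul_diagonal, Matrix.diagonal_mul]
  rw [this]
  have h1 : (0:ℝ) ≤ (1 + A) i j := by
    rw [Matrix.add_apply, Matrix.one_apply]
    have := hA i j
    split <;> linarith
  positivity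

lemma normAdj_mulVec_sqrt {n : ℕ} (A : Matrix (Fin n) (Fin n) ℝ)
    (hdeg : ∀ i, 0 ≤ deg A i) :
    (normAdj A).mulVec (fun i => Real.sqrt (1 + deg A i)) =
      (fun i => Real.sqrt (1 + deg A i)) := by
  have hpos : ∀ i, (0:ℝ) < 1 + deg A i := fun i => by linarith [hdeg i]
  have hspos : ∀ i, (0:ℝ) < Real.sqrt (1 + deg A i) :=
    fun i => Real.sqrt_pos.2 (hpos i)
  unfold normAdj
  rw [← mulVec_mulVec, ← mulVec_mulVec]
  have h1 : (Matrix.diagonal (fun i => (Real.sqrt (1 + deg A i))⁻¹)) *ᵥ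
      (fun i => Real.sqrt (1 + deg A i)) = fun _ => (1:ℝ) := by
    ext i
    rw [mulVec_diagonal]
    exact inv_mul_cancel₀ (hspos i).ne'
  rw [h1]
  have h2 : ((1 + A) : Matrix (Fin n) (Fin n) ℝ) *ᵥ (fun _ => (1:ℝ)) =
      fun i => 1 + deg A i := by
    ext i
    simp [mulVec, dotProduct, Matrix.add_apply, Matrix.one_apply, Finset.sum_add_distrib, deg]
  rw [h2]
  ext i
  rw [mulVec_diagonal]
  rw [← Real.sqrt_mul_self (hpos i).le]
  field_simp
  rw [div_eq_iff (ne_of_gt (Real.sqrt_pos.2 (Real.sqrt_pos.2 (pow_pos (hpos i) 2)))),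
    Real.mul_self_sqrt (Real.sqrt_nonneg _)]

/-- For the adjacency matrix `A_G` of a simple undirected graph with degrees
`D_ii` and `L = D̃^{-1/2}(I + A_G)D̃^{-1/2}`, for every integer `d ≥ 1`,
`(∑ i √(1 + D_ii)) / √(∑ i (1 + D_ii)) ≤ ‖L^(d−1) 𝟙‖₂ ≤ √n`. -/
theorem normAdj_pow_mulVec_one_bounds {n : ℕ} (A : Matrix (Fin n) (Fin n) ℝ)
    (hsym : A.IsSymm) (h01 : ∀ i j, A i j = 0 ∨ A i j = 1) (hdiag : ∀ i, A i i = 0)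
    (d : ℕ) (hd : 1 ≤ d) :
    (∑ i, Real.sqrt (1 + deg A i)) / Real.sqrt (∑ i, (1 + deg A i)) ≤
        vnorm ((normAdj A ^ (d - 1)).mulVec fun _ => (1 : ℝ)) ∧
      vnorm ((normAdj A ^ (d - 1)).mulVec fun _ => (1 : ℝ)) ≤ Real.sqrt n := by
  have hA : ∀ i j, 0 ≤ A i j := by
    intro i j; rcases h01 i j with h | h <;> rw [h] <;> norm_num
  have hdeg : ∀ i, 0 ≤ deg A i := fun i => Finset.sum_nonneg fun j _ => hA i j
  have hpos : ∀ i, (0:ℝ) < 1 + deg A i := fun i => by linarith [hdeg i]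
  set v : Fin n → ℝ := fun i => Real.sqrt (1 + deg A i) with hv
  have hvpos : ∀ i, 0 < v i := fun i => Real.sqrt_pos.2 (hpos i)
  set m := d - 1 with hm
  set M := normAdj A ^ m with hMdef
  -- M has nonnegative entries
  have hMnn : ∀ i j, 0 ≤ M i j := by
    rw [hMdef]; clear hMdef
    induction m with
    | zero =>
      intro i j
      rw [pow_zero, Matrix.one_apply]
      split <;> norm_num
    | succ k ih =>
      intro i j
      rw [pow_succ, Matrix.mul_apply]
      exact Finset.sum_nonneg fun l _ =>
        mul_nonneg (ih i l) (normAdj_nonneg A hA l j)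
  -- M is symmetric
  have hMsymm : Mᵀ = M := by
    rw [hMdef, transpose_pow, normAdj_symm A hsym]
  -- M fixes v
  have hMv : M.mulVec v = v := by
    rw [hMdef]; clear hMdef
    induction m with
    | zero => rw [pow_zero, one_mulVec]
    | succ k ih =>
      rw [pow_succ, ← mulVec_mulVec, hv, normAdj_mulVec_sqrt A hdeg, ← hv, ih]
  -- column sums of M against v
  have hcol : ∀ j, ∑ i, M i j * v i = v j := by
    intro j
    have : ∀ i, M i j = M j i := by
      intro i; exact congrFun (congrFun hMsymm j) i
    calc ∑ i, M i j * v i = ∑ i, M j i * v i := by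
          exact Finset.sum_congr rfl fun i _ => by rw [this i]
      _ = (M.mulVec v) j := rfl
      _ = v j := by rw [hMv]
  set x := M.mulVec (fun _ => (1:ℝ)) with hx
  have hxi : ∀ i, x i = ∑ j, M i j := by
    intro i
    simp [hx, mulVec, dotProduct]
  -- sum of v squared
  have hsumv2 : ∑ i, v i ^ 2 = ∑ i, (1 + deg A i) :=
    Finset.sum_congr rfl fun i _ => Real.sq_sqrt (hpos i).le
  constructor
  · -- lower bound
    rcases Nat.eq_zero_or_pos n with rfl | hn
    · simp [vnorm, Real.sqrt_nonneg]
    have hkey : ∑ i, v i * x i = ∑ i, v i := by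
      calc ∑ i, v i * x i = ∑ i, ∑ j, v i * M i j := by
            refine Finset.sum_congr rfl fun i _ => ?_
            rw [hxi i, Finset.mul_sum]
        _ = ∑ j, ∑ i, M i j * v i := by
            rw [Finset.sum_comm]
            exact Finset.sum_congr rfl fun j _ =>
              Finset.sum_congr rfl fun i _ => mul_comm _ _
        _ = ∑ j, v j := Finset.sum_congr rfl fun j _ => hcol j
    have hcs := Finset.sum_mul_sq_le_sq_mul_sq Finset.univ v x
    rw [hkey, hsumv2] at hcs
    have hT : (0:ℝ) < ∑ i, (1 + deg A i) :=
      Finset.sum_pos (fun i _ => hpos i) (Finset.univ_nonempty_iff.2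
        ⟨⟨0, hn⟩⟩)
    have hsT : (0:ℝ) < Real.sqrt (∑ i, (1 + deg A i)) := Real.sqrt_pos.2 hT
    rw [div_le_iff₀ hsT]
    have hsv : (0:ℝ) ≤ ∑ i, v i :=
      Finset.sum_nonneg fun i _ => (hvpos i).le
    have h1 : ∑ i, v i = Real.sqrt ((∑ i, v i) ^ 2) := (Real.sqrt_sq hsv).symm
    rw [h1]
    calc Real.sqrt ((∑ i, v i) ^ 2)
        ≤ Real.sqrt ((∑ i, (1 + deg A i)) * ∑ i, x i ^ 2) := Real.sqrt_le_sqrt hcs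
      _ = Real.sqrt (∑ i, (1 + deg A i)) * Real.sqrt (∑ i, x i ^ 2) :=
          Real.sqrt_mul hT.le _
      _ = vnorm x * Real.sqrt (∑ i, (1 + deg A i)) := by rw [vnorm, mul_comm]
  · -- upper bound
    have key : ∑ i, x i ^ 2 ≤ (n : ℝ) := by
      have hterm : ∀ i, x i ^ 2 ≤ v i * ∑ j, M i j * (v j)⁻¹ := by
        intro i
        have heq : ∀ j, Real.sqrt (M i j * v j) * Real.sqrt (M i j * (v j)⁻¹) = M i j := by
          intro j
          rw [← Real.sqrt_mul (mul_nonneg (hMnn i j) (hvpos j).le)]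
          have : M i j * v j * (M i j * (v j)⁻¹) = M i j ^ 2 := by
            calc M i j * v j * (M i j * (v j)⁻¹) = M i j ^ 2 * (v j * (v j)⁻¹) := by ring
              _ = M i j ^ 2 := by rw [mul_inv_cancel₀ (hvpos j).ne', mul_one]
          rw [this, Real.sqrt_sq (hMnn i j)]
        have hcs := Finset.sum_mul_sq_le_sq_mul_sq Finset.univ
          (fun j => Real.sqrt (M i j * v j)) (fun j => Real.sqrt (M i j * (v j)⁻¹))
        have e1 : ∑ j, Real.sqrt (M i j * v j) * Real.sqrt (M i j * (v j)⁻¹) = x i := by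
          rw [hxi i]; exact Finset.sum_congr rfl fun j _ => heq j
        have e2 : ∑ j, Real.sqrt (M i j * v j) ^ 2 = v i := by
          calc ∑ j, Real.sqrt (M i j * v j) ^ 2 = ∑ j, M i j * v j :=
                Finset.sum_congr rfl fun j _ =>
                  Real.sq_sqrt (mul_nonneg (hMnn i j) (hvpos j).le)
            _ = (M.mulVec v) i := rfl
            _ = v i := by rw [hMv]
        have e3 : ∑ j, Real.sqrt (M i j * (v j)⁻¹) ^ 2 = ∑ j, M i j * (v j)⁻¹ :=
          Finset.sum_congr rfl fun j _ =>
            Real.sq_sqrt (mul_nonneg (hMnn i j) (inv_nonneg.2 (hvpos j).le))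
        rw [e1, e2, e3] at hcs
        exact hcs
      calc ∑ i, x i ^ 2 ≤ ∑ i, v i * ∑ j, M i j * (v j)⁻¹ :=
            Finset.sum_le_sum fun i _ => hterm i
        _ = ∑ i, ∑ j, M i j * v i * (v j)⁻¹ := by
            refine Finset.sum_congr rfl fun i _ => ?_
            rw [Finset.mul_sum]
            exact Finset.sum_congr rfl fun j _ => by ring
        _ = ∑ j, ∑ i, M i j * v i * (v j)⁻¹ := Finset.sum_comm
        _ = ∑ j, (∑ i, M i j * v i) * (v j)⁻¹ := by
            refine Finset.sum_congr rfl fun j _ => ?_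
            rw [Finset.sum_mul]
        _ = (n : ℝ) := by
            rw [Finset.sum_congr rfl fun j (_ : j ∈ Finset.univ) => by
              rw [hcol j, mul_inv_cancel₀ (hvpos j).ne']]
            simp
    rw [vnorm]
    calc Real.sqrt (∑ i, x i ^ 2) ≤ Real.sqrt n := Real.sqrt_le_sqrt key
end
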